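/- Let X₀,…,X_{n-1} be i.i.d. complex-valued random variables with |X_i| = 1, and let m_n be a median of CF_n(s). Then for every α ≥ 0, P(|CF_n(s) − m_n| ≥ α) ≤ 4 exp(−α²/16). -/

import Mathlib

/-!
Changing one coordinate `X_i` moves `CF_n` by at most `|X_i - X_i'| / √n ≤ 2 / √n`. After
retracting `ℂ` onto the unit circle (which changes nothing almost surely) this bounded-difference
property holds everywhere, and McDiarmid's argument applies: conditioning on the first coordinate,
`f - 𝔼 f` splits into a part that is sub-Gaussian in that coordinate by Hoeffding's lemma and the
centred conditional mean, which is again of bounded differences. So `CF_n - 𝔼 CF_n` is sub-Gaussian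
with variance proxy `n (1/√n)² = 1`. Since half of the mass lies on either side of `m_n`, the
Chernoff bounds force `|m_n - 𝔼 CF_n| ≤ √(2 log 2)`, and the two tails then give
`4 exp (-α² / 4) ≤ 4 exp (-α² / 16)`.
-/

open MeasureTheory Finset

noncomputable def ofdm (n : ℕ) (T : ℝ) (x : Fin n → ℂ) (t : ℝ) : ℂ :=
  ((Real.sqrt n : ℝ) : ℂ)⁻¹ *
    ∑ i : Fin n, x i * Complex.exp (Complex.I * ((2 * Real.pi * (i : ℕ) * t / T : ℝ) : ℂ))

noncomputable def crest (n : ℕ) (T : ℝ) (x : Fin n → ℂ) : ℝ :=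
  sSup ((fun t => ‖ofdm n T x t‖) '' Set.Icc (0 : ℝ) T)

open ProbabilityTheory Real Function
open scoped NNReal

section Oscillation

variable {E : Type*} [MeasurableSpace E] (ν : Measure E) [IsProbabilityMeasure ν]
  {h : E → ℝ} {c : ℝ} (hc : ∀ z w, |h z - h w| ≤ c)
include hc

lemma integrable_of_abs_sub_le (hh : Measurable h) : Integrable h ν := by
  obtain ⟨w⟩ := nonempty_of_isProbabilityMeasure ν
  refine .mono' (integrable_const (|h w| + c)) hh.aestronglyMeasurable (ae_of_all _ fun z => ?_)
  have := abs_sub_abs_le_abs_sub (h z) (h w)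
  rw [norm_eq_abs]
  linarith [hc z w]

lemma abs_sub_integral_le_of_abs_sub_le (hh : Measurable h) (z : E) :
    |h z - ∫ w, h w ∂ν| ≤ c := by
  have hint := integrable_of_abs_sub_le ν hc hh
  have : h z - ∫ w, h w ∂ν = ∫ w, (h z - h w) ∂ν := by
    rw [integral_sub (integrable_const _) hint, integral_const, probReal_univ, one_smul]
  simpa [this] using
    norm_integral_le_of_norm_le_const (μ := ν) (f := fun w => h z - h w) (ae_of_all _ (hc z))

end Oscillation

lemma hasSubgaussianMGF_sub_integral_of_abs_sub_le {E : Type*} [MeasurableSpace E]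
    (ν : Measure E) [IsProbabilityMeasure ν] {h : E → ℝ} (hh : Measurable h) {c : ℝ≥0}
    (hc : ∀ z w, |h z - h w| ≤ c) :
    HasSubgaussianMGF (fun z => h z - ∫ w, h w ∂ν) ((c / 2) ^ 2) ν := by
  have := nonempty_of_isProbabilityMeasure ν
  have hbdd : BddBelow (Set.range h) :=
    ⟨h this.some - c, by rintro _ ⟨z, rfl⟩; linarith [(abs_le.mp (hc this.some z)).2]⟩
  have hIcc : ∀ z, h z ∈ Set.Icc (⨅ z, h z) ((⨅ z, h z) + c) := fun z =>
    ⟨ciInf_le hbdd z, by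
      rw [← sub_le_iff_le_add]
      exact le_ciInf fun w => by linarith [(abs_le.mp (hc z w)).2]⟩
  simpa [NNReal.nnnorm_eq] using
    hasSubgaussianMGF_of_mem_Icc hh.aemeasurable (ae_of_all _ hIcc)

lemma ProbabilityTheory.HasSubgaussianMGF.prod_add {E Y : Type*}
    [MeasurableSpace E] [MeasurableSpace Y]
    {ν : Measure E} [IsProbabilityMeasure ν] {μ : Measure Y} [IsProbabilityMeasure μ]
    {F : E × Y → ℝ} (hF : Measurable F) {a : ℝ} (hFa : ∀ p, |F p| ≤ a) {cF : ℝ≥0}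
    (hFsub : ∀ y, HasSubgaussianMGF (fun z => F (z, y)) cF ν)
    {G : Y → ℝ} {cG : ℝ≥0} (hG : HasSubgaussianMGF G cG μ) :
    HasSubgaussianMGF (fun p => F p + G p.2) (cF + cG) (ν.prod μ) := by
  have hint : ∀ t, Integrable (fun p : E × Y => exp (t * (F p + G p.2))) (ν.prod μ) := by
    intro t
    simp_rw [mul_add, exp_add]
    refine ((hG.integrable_exp_mul t).comp_snd ν).bdd_mul (c := exp (|t| * a))
      (by fun_prop) (ae_of_all _ fun p => ?_)
    rw [norm_eq_abs, abs_exp, exp_le_exp]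
    exact (le_abs_self _).trans ((abs_mul t (F p)).trans_le (by gcongr; exact hFa p))
  refine ⟨hint, fun t => ?_⟩
  calc mgf (fun p => F p + G p.2) (ν.prod μ) t
      = ∫ y, exp (t * G y) * mgf (fun z => F (z, y)) ν t ∂μ := by
        rw [mgf, integral_prod_symm _ (hint t)]
        refine integral_congr_ae (ae_of_all _ fun y => ?_)
        simp only [mgf, mul_add, exp_add, ← integral_const_mul]
        congr 1 with z
        ring
    _ ≤ ∫ y, exp (t * G y) * exp (cF * t ^ 2 / 2) ∂μ :=
        integral_mono_of_nonneg (ae_of_all _ fun y => mul_nonneg (exp_nonneg _) (mgf_nonneg))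
          ((hG.integrable_exp_mul t).mul_const _)
          (ae_of_all _ fun y => mul_le_mul_of_nonneg_left ((hFsub y).mgf_le t) (exp_nonneg _))
    _ = mgf G μ t * exp (cF * t ^ 2 / 2) := integral_mul_const _ _
    _ ≤ exp (cG * t ^ 2 / 2) * exp (cF * t ^ 2 / 2) := by gcongr; exact hG.mgf_le t
    _ = exp ((cF + cG : ℝ≥0) * t ^ 2 / 2) := by rw [← exp_add]; push_cast; ring_nf

lemma measurable_fin_cons {E : Type*} [MeasurableSpace E] {n : ℕ} :
    Measurable (fun p : E × (Fin n → E) => (Fin.cons p.1 p.2 : Fin (n + 1) → E)) := by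
  refine measurable_pi_iff.2 fun i => Fin.cases ?_ (fun j => ?_) i
  · simpa using measurable_fst
  · simp only [Fin.cons_succ]
    fun_prop

lemma measurePreserving_head_tail {E : Type*} [MeasurableSpace E] {n : ℕ}
    (ν : Fin (n + 1) → Measure E) [∀ i, SigmaFinite (ν i)] :
    MeasurePreserving (fun x => (x 0, Fin.tail x)) (Measure.pi ν)
      ((ν 0).prod (Measure.pi fun j => ν j.succ)) := by
  have := measurePreserving_piFinSuccAbove ν 0
  simp only [Fin.succAbove_zero] at this
  exact this

def HasBoundedDifferences {ι E : Type*} [DecidableEq ι] (f : (ι → E) → ℝ) (c : ι → ℝ≥0) :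
    Prop :=
  ∀ x i z w, |f (update x i z) - f (update x i w)| ≤ c i

namespace HasBoundedDifferences

variable {E : Type*} {n : ℕ} {f : (Fin (n + 1) → E) → ℝ} {c : Fin (n + 1) → ℝ≥0}

lemma abs_cons_sub_cons_le (hc : HasBoundedDifferences f c) (y : Fin n → E) (z w : E) :
    |f (Fin.cons z y) - f (Fin.cons w y)| ≤ c 0 := by
  simpa only [Fin.update_cons_zero] using hc (Fin.cons z y) 0 z w

lemma integral_cons [MeasurableSpace E] (hc : HasBoundedDifferences f c) (hf : Measurable f)
    (ν : Measure E) [IsProbabilityMeasure ν] :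
    HasBoundedDifferences (fun y => ∫ z, f (Fin.cons z y) ∂ν) (fun j => c j.succ) := by
  intro y j z w
  have hint : ∀ y : Fin n → E, Integrable (fun u => f (Fin.cons u y)) ν := fun y =>
    integrable_of_abs_sub_le ν (hc.abs_cons_sub_cons_le y)
      ((hf.comp measurable_fin_cons).comp measurable_prodMk_right)
  have hdiff := fun u => hc (Fin.cons u y) j.succ z w
  simp only [← Fin.cons_update] at hdiff
  rw [← integral_sub (hint _) (hint _)]
  simpa using norm_integral_le_of_norm_le_const (μ := ν)
    (f := fun u => f (Fin.cons u (update y j z)) - f (Fin.cons u (update y j w)))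
    (ae_of_all _ hdiff)

theorem hasSubgaussianMGF_sub_integral {E : Type*} [MeasurableSpace E] :
    ∀ {n : ℕ} (ν : Fin n → Measure E) [∀ i, IsProbabilityMeasure (ν i)]
      {f : (Fin n → E) → ℝ} {c : Fin n → ℝ≥0}, HasBoundedDifferences f c → Measurable f →
      HasSubgaussianMGF (fun x => f x - ∫ y, f y ∂Measure.pi ν) (∑ i, (c i / 2) ^ 2)
        (Measure.pi ν)
  | 0, ν, _, f, c, _, _ => by
    have hf : ∀ x, f x - ∫ y, f y ∂Measure.pi ν = 0 := fun x => by
      simp [Subsingleton.elim _ x]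
    simp [hf]
  | n + 1, ν, _, f, c, hc, hf => by
    set g : (Fin n → E) → ℝ := fun y => ∫ z, f (Fin.cons z y) ∂ν 0
    have hfcons : Measurable fun p : E × (Fin n → E) => f (Fin.cons p.1 p.2) :=
      hf.comp measurable_fin_cons
    have hg : Measurable g := hfcons.stronglyMeasurable.integral_prod_left'.measurable
    have hF : ∀ y, HasSubgaussianMGF (fun z => f (Fin.cons z y) - g y) ((c 0 / 2) ^ 2) (ν 0) :=
      fun y => hasSubgaussianMGF_sub_integral_of_abs_sub_le (ν 0)
        (hfcons.comp measurable_prodMk_right) (hc.abs_cons_sub_cons_le y)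
    have hG := hasSubgaussianMGF_sub_integral (fun j => ν j.succ) (hc.integral_cons hf (ν 0)) hg
    have hsum := HasSubgaussianMGF.prod_add (F := fun p => f (Fin.cons p.1 p.2) - g p.2)
      (hfcons.sub (hg.comp measurable_snd))
      (fun p => abs_sub_integral_le_of_abs_sub_le (ν 0) (hc.abs_cons_sub_cons_le p.2)
        (hfcons.comp measurable_prodMk_right) p.1) hF hG
    have hmp := measurePreserving_head_tail ν
    have hmean : ∫ x, f x ∂Measure.pi ν = ∫ y, g y ∂Measure.pi fun j => ν j.succ := by
      calc ∫ x, f x ∂Measure.pi ν = ∫ x, f (Fin.cons (x 0) (Fin.tail x)) ∂Measure.pi ν := by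
            simp only [Fin.cons_self_tail]
        _ = ∫ p, f (Fin.cons p.1 p.2) ∂(ν 0).prod (Measure.pi fun j => ν j.succ) := by
            rw [← hmp.map_eq, integral_map hmp.measurable.aemeasurable
              hfcons.aestronglyMeasurable]
        _ = ∫ y, g y ∂Measure.pi fun j => ν j.succ := integral_prod_symm _ <| by
            refine (hsum.integrable.add
              (integrable_const (∫ y, g y ∂Measure.pi fun j => ν j.succ))).congr
              (ae_of_all _ fun p => ?_)
            simp only [Pi.add_apply]
            ring
    rw [← hmp.map_eq] at hsum
    rw [Fin.sum_univ_succ]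
    refine (hsum.of_map hmp.measurable.aemeasurable).congr (ae_of_all _ fun x => ?_)
    simp only [comp_apply, Fin.cons_self_tail, hmean, g]
    ring

end HasBoundedDifferences

lemma exp_neg_log_two : exp (-log 2) = 1 / 2 := by
  rw [exp_neg, exp_log two_pos, one_div]

namespace ProbabilityTheory.HasSubgaussianMGF

variable {Ω : Type*} [MeasurableSpace Ω] {μ : Measure Ω} {K : ℝ≥0}

lemma le_sqrt_of_half_le_measureReal {Y : Ω → ℝ} (hK : 0 < K)
    (hY : HasSubgaussianMGF Y K μ) {s : ℝ} (hs : 1 / 2 ≤ μ.real {ω | s ≤ Y ω}) :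
    s ≤ √(2 * K * log 2) := by
  by_contra! hlt
  have hs0 : 0 ≤ s := (sqrt_nonneg _).trans hlt.le
  have hsq : 2 * K * log 2 < s ^ 2 := lt_sq_of_sqrt_lt hlt
  have : exp (-s ^ 2 / (2 * K)) < 1 / 2 := by
    rw [← exp_neg_log_two, exp_lt_exp, neg_div, neg_lt_neg_iff, lt_div_iff₀ (by positivity)]
    linarith
  linarith [hY.measure_ge_le hs0]

lemma abs_sub_le_of_median {X : Ω → ℝ} {a m : ℝ} (hK : 0 < K)
    (hX : HasSubgaussianMGF (fun ω => X ω - a) K μ)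
    (hm₁ : 1 / 2 ≤ μ.real {ω | X ω ≤ m}) (hm₂ : 1 / 2 ≤ μ.real {ω | m ≤ X ω}) :
    |m - a| ≤ √(2 * K * log 2) := by
  have hupper : m - a ≤ √(2 * K * log 2) :=
    hX.le_sqrt_of_half_le_measureReal hK (by simpa using hm₂)
  have hlower : a - m ≤ √(2 * K * log 2) :=
    hX.neg.le_sqrt_of_half_le_measureReal hK
      (by simpa only [Pi.neg_apply, neg_sub, sub_le_sub_iff_left] using hm₁)
  exact abs_le.mpr ⟨by linarith, hupper⟩

lemma measureReal_abs_sub_median_ge_le [IsProbabilityMeasure μ] {X : Ω → ℝ}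
    {a m α : ℝ} (hK : 0 < K) (hX : HasSubgaussianMGF (fun ω => X ω - a) K μ)
    (hm₁ : 1 / 2 ≤ μ.real {ω | X ω ≤ m}) (hm₂ : 1 / 2 ≤ μ.real {ω | m ≤ X ω}) (hα : 0 ≤ α) :
    μ.real {ω | α ≤ |X ω - m|} ≤ 4 * exp (-α ^ 2 / (4 * K)) := by
  set s₀ := √(2 * K * log 2)
  have hs₀ : s₀ ^ 2 = 2 * K * log 2 := sq_sqrt (by positivity)
  have hma := hX.abs_sub_le_of_median hK hm₁ hm₂
  rcases le_or_gt α (2 * s₀) with hsmall | hlarge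
  · calc μ.real {ω | α ≤ |X ω - m|} ≤ 1 := measureReal_le_one
      _ = 4 * exp (-(2 * s₀) ^ 2 / (4 * K)) := by
        rw [mul_pow, hs₀, show -(2 ^ 2 * (2 * K * log 2)) / (4 * K) = -log 2 + -log 2 by
          field_simp; ring, exp_add, exp_neg_log_two]
        norm_num
      _ ≤ 4 * exp (-α ^ 2 / (4 * K)) := by gcongr
  set s := α - s₀
  have hs : 0 ≤ s := by linarith [sqrt_nonneg (2 * K * log 2)]
  have hcover :
      {ω | α ≤ |X ω - m|} ⊆ {ω | s ≤ X ω - a} ∪ {ω | s ≤ (-fun ω => X ω - a) ω} := by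
    intro ω hω
    rcases le_abs'.mp (show α ≤ |X ω - m| from hω) with h | h <;> [right; left] <;>
      simp only [Set.mem_ofPred_eq, Pi.neg_apply] <;> linarith [abs_le.mp hma]
  have htail : exp (-s ^ 2 / (2 * K)) ≤ 2 * exp (-α ^ 2 / (4 * K)) := by
    have : -α ^ 2 / (4 * K) + log 2 - -s ^ 2 / (2 * K) = (α - 2 * s₀) ^ 2 / (4 * K) := by
      rw [show log 2 = s₀ ^ 2 / (2 * K) by rw [hs₀]; field_simp]
      field_simp
      ring
    rw [show 2 * exp (-α ^ 2 / (4 * K)) = exp (-α ^ 2 / (4 * K) + log 2) by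
      rw [exp_add, exp_log two_pos, mul_comm], exp_le_exp]
    linarith [show 0 ≤ (α - 2 * s₀) ^ 2 / (4 * K) by positivity]
  calc μ.real {ω | α ≤ |X ω - m|}
      ≤ μ.real {ω | s ≤ X ω - a} + μ.real {ω | s ≤ (-fun ω => X ω - a) ω} :=
        (measureReal_mono hcover).trans (measureReal_union_le _ _)
    _ ≤ exp (-s ^ 2 / (2 * K)) + exp (-s ^ 2 / (2 * K)) :=
        add_le_add (hX.measure_ge_le hs) (hX.neg.measure_ge_le hs)
    _ ≤ 4 * exp (-α ^ 2 / (4 * K)) := by linarith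

end ProbabilityTheory.HasSubgaussianMGF

section Crest

variable {n : ℕ} {T : ℝ}

lemma norm_ofdm_le (x : Fin n → ℂ) (t : ℝ) : ‖ofdm n T x t‖ ≤ (√n)⁻¹ * ∑ i, ‖x i‖ := by
  rw [ofdm, norm_mul, norm_inv, Complex.norm_real, norm_of_nonneg (sqrt_nonneg _)]
  gcongr
  refine (norm_sum_le _ _).trans_eq (sum_congr rfl fun i _ => ?_)
  rw [norm_mul, Complex.norm_exp_I_mul_ofReal, mul_one]

lemma ofdm_sub (x y : Fin n → ℂ) (t : ℝ) :
    ofdm n T x t - ofdm n T y t = ofdm n T (x - y) t := by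
  simp [ofdm, ← mul_sub, ← sum_sub_distrib, sub_mul]

lemma crest_le_add (x y : Fin n → ℂ) :
    crest n T x ≤ crest n T y + (√n)⁻¹ * ∑ i, ‖x i - y i‖ := by
  rcases (Set.Icc (0 : ℝ) T).eq_empty_or_nonempty with hT | hT
  · simp only [crest, hT, Set.image_empty, Real.sSup_empty, zero_add]
    positivity
  refine csSup_le (hT.image _) ?_
  rintro _ ⟨t, ht, rfl⟩
  have hbdd : BddAbove ((fun t => ‖ofdm n T y t‖) '' Set.Icc (0 : ℝ) T) :=
    ⟨_, by rintro _ ⟨s, -, rfl⟩; exact norm_ofdm_le y s⟩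
  calc ‖ofdm n T x t‖ ≤ ‖ofdm n T y t‖ + ‖ofdm n T (x - y) t‖ := by
        rw [← ofdm_sub]; exact norm_le_norm_add_norm_sub' _ _
    _ ≤ crest n T y + (√n)⁻¹ * ∑ i, ‖x i - y i‖ :=
        add_le_add (le_csSup hbdd ⟨t, ht, rfl⟩) (norm_ofdm_le _ t)

lemma abs_crest_sub_le (x y : Fin n → ℂ) :
    |crest n T x - crest n T y| ≤ (√n)⁻¹ * ∑ i, ‖x i - y i‖ := by
  have := crest_le_add (T := T) y x
  simp only [norm_sub_rev (y _)] at this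
  exact abs_sub_le_iff.mpr ⟨by linarith [crest_le_add (T := T) x y], by linarith⟩

lemma lipschitzWith_crest : LipschitzWith (NNReal.sqrt n) (crest n T) := by
  refine LipschitzWith.of_dist_le_mul fun x y => (abs_crest_sub_le x y).trans ?_
  calc (√n)⁻¹ * ∑ i, ‖x i - y i‖ ≤ (√n)⁻¹ * ∑ _i : Fin n, dist x y := by
        gcongr with i; exact (dist_eq_norm _ _).symm.trans_le (dist_le_pi_dist x y i)
    _ = NNReal.sqrt n * dist x y := by
        rw [sum_const, card_univ, Fintype.card_fin, nsmul_eq_mul, ← mul_assoc, inv_mul_eq_div,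
          div_sqrt, Real.coe_sqrt, NNReal.coe_natCast]

lemma abs_crest_update_sub_le (x : Fin n → ℂ) (i : Fin n) (z w : ℂ) :
    |crest n T (update x i z) - crest n T (update x i w)| ≤ (√n)⁻¹ * ‖z - w‖ := by
  refine (abs_crest_sub_le _ _).trans_eq ?_
  rw [sum_eq_single i (fun j _ hj => by simp [update_of_ne hj]) (by simp)]
  simp

lemma hasBoundedDifferences_crest_comp {r : ℂ → ℂ} (hr : ∀ z, ‖r z‖ ≤ 1) :
    HasBoundedDifferences (fun x => crest n T (r ∘ x)) fun _ => 2 / NNReal.sqrt n := by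
  intro x i z w
  simp only [comp_update]
  refine (abs_crest_update_sub_le _ i _ _).trans ?_
  rw [NNReal.coe_div, Real.coe_sqrt, NNReal.coe_natCast, div_eq_inv_mul, NNReal.coe_ofNat]
  gcongr
  linarith [norm_sub_le (r z) (r w), hr z, hr w]

end Crest

lemma hasSubgaussianMGF_crest_comp_sub_integral {n : ℕ} (hn : 0 < n) (T : ℝ)
    (ν : Fin n → Measure ℂ) [∀ i, IsProbabilityMeasure (ν i)] {r : ℂ → ℂ}
    (hr : ∀ z, ‖r z‖ ≤ 1) (hrm : Measurable r) :
    HasSubgaussianMGF (fun x => crest n T (r ∘ x) - ∫ y, crest n T (r ∘ y) ∂Measure.pi ν) 1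
      (Measure.pi ν) := by
  have hK : ∑ _i : Fin n, (2 / NNReal.sqrt n / 2) ^ 2 = 1 := by
    rw [sum_const, card_univ, Fintype.card_fin, nsmul_eq_mul, ← NNReal.coe_inj]
    have : (0 : ℝ) < n := by exact_mod_cast hn
    push_cast
    rw [div_div_cancel_left' two_ne_zero, inv_pow, sq_sqrt this.le, mul_inv_cancel₀ this.ne']
  rw [← hK]
  exact (hasBoundedDifferences_crest_comp hr).hasSubgaussianMGF_sub_integral ν
    (lipschitzWith_crest.continuous.measurable.comp
      (measurable_pi_lambda _ fun i => hrm.comp (measurable_pi_apply i)))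

theorem stmt_9_general {Ω : Type*} [MeasurableSpace Ω] (μ : Measure Ω) [IsProbabilityMeasure μ]
    (n : ℕ) (hn : 0 < n) (T : ℝ)
    (X : Fin n → Ω → ℂ) (hmeas : ∀ j, Measurable (X j))
    (hindep : ProbabilityTheory.iIndepFun X μ)
    (hunit : ∀ j, ∀ᵐ ω ∂μ, ‖X j ω‖ = 1)
    (m : ℝ)
    (hm₁ : (1 : ℝ) / 2 ≤ (μ {ω | crest n T (fun j => X j ω) ≤ m}).toReal)
    (hm₂ : (1 : ℝ) / 2 ≤ (μ {ω | m ≤ crest n T (fun j => X j ω)}).toReal)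
    (α : ℝ) (hα : 0 ≤ α) :
    (μ {ω | α ≤ |crest n T (fun j => X j ω) - m|}).toReal ≤
      4 * Real.exp (-α ^ 2 / 16) := by
  set r : ℂ → ℂ := fun z => if ‖z‖ = 1 then z else 1
  have hr : ∀ z, ‖r z‖ ≤ 1 := fun z => by by_cases hz : ‖z‖ = 1 <;> simp [r, hz]
  have hrm : Measurable r :=
    Measurable.ite (measurableSet_eq_fun measurable_norm measurable_const) measurable_id
      measurable_const
  have := fun i => Measure.isProbabilityMeasure_map (μ := μ) (hmeas i).aemeasurable
  have hsub := hasSubgaussianMGF_crest_comp_sub_integral hn T (fun i => μ.map (X i)) hr hrm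
  rw [← hindep.map_fun_eq_pi_map fun i => (hmeas i).aemeasurable] at hsub
  have hcrest : ∀ᵐ ω ∂μ, crest n T (r ∘ fun j => X j ω) = crest n T fun j => X j ω := by
    filter_upwards [ae_all_iff.2 hunit] with ω hω
    congr with j
    simp [r, hω j]
  have hconc := HasSubgaussianMGF.measureReal_abs_sub_median_ge_le
    (X := fun ω => crest n T fun j => X j ω)
    (a := ∫ x, crest n T (r ∘ x) ∂μ.map fun ω j => X j ω) one_pos
    ((hsub.of_map (by fun_prop)).congr (hcrest.mono fun ω hω => by simp only [comp_apply, hω]))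
    hm₁ hm₂ hα
  refine hconc.trans (mul_le_mul_of_nonneg_left (exp_le_exp.mpr ?_) (by norm_num))
  push_cast
  linarith [sq_nonneg α]

theorem stmt_9 {Ω : Type*} [MeasurableSpace Ω] (μ : Measure Ω) [IsProbabilityMeasure μ]
    (n : ℕ) (hn : 0 < n) (T : ℝ) (hT : 0 < T)
    (X : Fin n → Ω → ℂ) (hmeas : ∀ j, Measurable (X j))
    (hindep : ProbabilityTheory.iIndepFun X μ)
    (hident : ∀ i j, Measure.map (X i) μ = Measure.map (X j) μ)
    (hunit : ∀ j, ∀ᵐ ω ∂μ, ‖X j ω‖ = 1)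
    (m : ℝ)
    (hm₁ : (1 : ℝ) / 2 ≤ (μ {ω | crest n T (fun j => X j ω) ≤ m}).toReal)
    (hm₂ : (1 : ℝ) / 2 ≤ (μ {ω | m ≤ crest n T (fun j => X j ω)}).toReal)
    (α : ℝ) (hα : 0 ≤ α) :
    (μ {ω | α ≤ |crest n T (fun j => X j ω) - m|}).toReal ≤
      4 * Real.exp (-α ^ 2 / 16) :=
  stmt_9_general μ n hn T X hmeas hindep hunit m hm₁ hm₂ α hα
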